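/- Perfect classical success forces distinguishability at least 1/α: in the graph equality task, if S_C = 1 (i.e., for every message m and every vertex y, min(p_e(m|y), ∑_{x~y} p_e(m|x)) = 0), then D_C ≥ 1/α(G). -/

import Mathlib

/-!
Under perfect success, each message `m` can only be sent from an independent set of vertices
(a vertex and one of its neighbours cannot both send `m` with positive probability), so
`∑ₓ p(m,x) ≤ α · maxₓ p(m,x)`. Summing over `m` gives `N ≤ α · ∑ₘ maxₓ p(m,x)`.
-/

open Finset

/-- The independence number of a finite simple graph. -/
def indepNum {V : Type*} [Fintype V] [DecidableEq V] (G : SimpleGraph V) [DecidableRel G.Adj] : ℕ :=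
  Finset.univ.powerset.sup fun s =>
    if ∀ x ∈ s, ∀ y ∈ s, ¬ G.Adj x y then s.card else 0

lemma Finset.sum_le_card_support_mul_sup' {ι R : Type*} [Semiring R] [LinearOrder R]
    [IsOrderedAddMonoid R] {s : Finset ι} (hs : s.Nonempty) (f : ι → R) :
    ∑ x ∈ s, f x ≤ #{x ∈ s | f x ≠ 0} * s.sup' hs f := by
  rw [← sum_filter_ne_zero, ← nsmul_eq_mul]
  exact sum_le_card_nsmul _ _ _ fun x hx => le_sup' f (mem_filter.mp hx).1

section

variable {V : Type*} [Fintype V] {G : SimpleGraph V} [DecidableRel G.Adj]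

lemma isIndepSet_support_of_min_eq_zero {f : V → ℝ} (hf : ∀ x, 0 ≤ f x)
    (hmin : ∀ y, min (f y) (∑ x ∈ G.neighborFinset y, f x) = 0) :
    G.IsIndepSet (Function.support f) := by
  intro x hx y hy _ hxy
  have hnbhd : 0 < ∑ z ∈ G.neighborFinset y, f z :=
    sum_pos' (fun z _ => hf z) ⟨x, (G.mem_neighborFinset y x).mpr hxy.symm, (hf x).lt_of_ne' hx⟩
  exact (lt_min ((hf y).lt_of_ne' hy) hnbhd).ne' (hmin y)

variable [DecidableEq V]

lemma card_le_indepNum {s : Finset V} (hs : G.IsIndepSet s) : #s ≤ indepNum G := by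
  have hs' : ∀ x ∈ s, ∀ y ∈ s, ¬ G.Adj x y := fun x hx y hy hxy => hs hx hy hxy.ne hxy
  unfold indepNum
  exact (if_pos hs').ge.trans (le_sup (f := fun t : Finset V =>
    if ∀ x ∈ t, ∀ y ∈ t, ¬ G.Adj x y then #t else 0) (mem_powerset.mpr (subset_univ s)))

variable (G) in
lemma one_le_indepNum [Nonempty V] : 1 ≤ indepNum G := by
  obtain ⟨x⟩ := ‹Nonempty V›
  simpa using card_le_indepNum (G := G) (s := {x}) (by simp)

lemma sum_le_indepNum_mul_sup' [Nonempty V] {f : V → ℝ} (hf : ∀ x, 0 ≤ f x)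
    (hmin : ∀ y, min (f y) (∑ x ∈ G.neighborFinset y, f x) = 0) :
    ∑ x, f x ≤ indepNum G * univ.sup' univ_nonempty f := by
  obtain ⟨x⟩ := ‹Nonempty V›
  have hsup : 0 ≤ univ.sup' univ_nonempty f := (hf x).trans (le_sup' f (mem_univ x))
  calc ∑ x, f x ≤ #{x | f x ≠ 0} * univ.sup' univ_nonempty f :=
        sum_le_card_support_mul_sup' univ_nonempty f
    _ ≤ indepNum G * univ.sup' univ_nonempty f := by
        gcongr
        refine card_le_indepNum ?_
        simpa [Function.support] using isIndepSet_support_of_min_eq_zero hf hmin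

end

theorem perfect_success_distinguishability_bound
    (N : ℕ) (hN : 0 < N) (G : SimpleGraph (Fin N)) [DecidableRel G.Adj]
    (M : Type*) [Fintype M]
    (p : M → Fin N → ℝ) (hp : ∀ m x, 0 ≤ p m x) (hsum : ∀ x, ∑ m, p m x = 1)
    (hperfect : ∀ m y, min (p m y) (∑ x ∈ G.neighborFinset y, p m x) = 0) :
    haveI : Nonempty (Fin N) := Fin.pos_iff_nonempty.mp hN
    (1 / N : ℝ) * ∑ m, Finset.univ.sup' Finset.univ_nonempty (p m)
      ≥ 1 / (indepNum G : ℝ) := by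
  have : Nonempty (Fin N) := Fin.pos_iff_nonempty.mp hN
  have hα : (0 : ℝ) < indepNum G := by exact_mod_cast one_le_indepNum G
  have htotal : (N : ℝ) ≤ indepNum G * ∑ m, univ.sup' univ_nonempty (p m) :=
    calc (N : ℝ) = ∑ m, ∑ x, p m x := by simp [sum_comm (f := p), hsum]
      _ ≤ ∑ m, indepNum G * univ.sup' univ_nonempty (p m) :=
        sum_le_sum fun m _ => sum_le_indepNum_mul_sup' (hp m) (hperfect m)
      _ = indepNum G * ∑ m, univ.sup' univ_nonempty (p m) := (mul_sum _ _ _).symm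
  rw [ge_iff_le, one_div_mul_eq_div, div_le_div_iff₀ hα (by exact_mod_cast hN)]
  linarith
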